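/- Let (X, ρ) be a rectangular quasi b-metric space with coefficient s ≥ 1 and let (xₙ) be a forward Cauchy sequence with pairwise distinct elements. If (xₙ) forward converges to x ∈ X (ρ(x, xₙ) → 0) and backward converges to y ∈ X (ρ(xₙ, y) → 0), then x = y. -/

import Mathlib

/-!
Since the points are pairwise distinct, for large `n` the points `xₙ, xₙ₊₁` are distinct from
each other and from `x` and `y`, so the rectangular inequality gives
`ρ(x, y) ≤ s (ρ(x, xₙ) + ρ(xₙ, xₙ₊₁) + ρ(xₙ₊₁, y))`. All three terms tend to `0`
(the middle one by forward Cauchyness), hence `ρ(x, y) = 0`.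
-/

open Filter Topology

theorem Function.Injective.eventually_ne_atTop {X : Type*} {xs : ℕ → X}
    (hinj : Function.Injective xs) (a : X) : ∀ᶠ n in atTop, xs n ≠ a := by
  rw [← Nat.cofinite_eq_atTop]
  exact hinj.tendsto_cofinite.eventually (eventually_cofinite_ne a)

theorem tendsto_succ_of_forward_cauchy {X : Type*} {ρ : X → X → ℝ} {xs : ℕ → X}
    (hnonneg : ∀ x y, 0 ≤ ρ x y)
    (hcauchy : ∀ ε > (0:ℝ), ∃ N, ∀ n m, N ≤ n → n ≤ m → ρ (xs n) (xs m) < ε) :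
    Tendsto (fun n => ρ (xs n) (xs (n + 1))) atTop (𝓝 0) := by
  rw [Metric.tendsto_atTop]
  intro ε hε
  obtain ⟨N, hN⟩ := hcauchy ε hε
  refine ⟨N, fun n hn => ?_⟩
  rw [Real.dist_0_eq_abs, abs_of_nonneg (hnonneg _ _)]
  exact hN n (n + 1) hn n.le_succ

theorem rqb_forward_backward_limits_eq_general
    {X : Type*} (ρ : X → X → ℝ) (s : ℝ)
    (hnonneg : ∀ x y, 0 ≤ ρ x y)
    (hzero : ∀ x y, ρ x y = 0 ↔ x = y)
    (hrect : ∀ x y u v : X, u ≠ v → u ≠ x → u ≠ y → v ≠ x → v ≠ y →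
      ρ x y ≤ s * (ρ x u + ρ u v + ρ v y))
    (xs : ℕ → X)
    (hinj : Function.Injective xs)
    (hcauchy : ∀ ε > (0:ℝ), ∃ N, ∀ n m, N ≤ n → n ≤ m → ρ (xs n) (xs m) < ε)
    (x y : X)
    (hfwd : Tendsto (fun n => ρ x (xs n)) atTop (𝓝 0))
    (hbwd : Tendsto (fun n => ρ (xs n) y) atTop (𝓝 0)) :
    x = y := by
  have hbound : Tendsto (fun n => s * (ρ x (xs n) + ρ (xs n) (xs (n + 1)) + ρ (xs (n + 1)) y))
      atTop (𝓝 0) := by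
    simpa using ((hfwd.add (tendsto_succ_of_forward_cauchy hnonneg hcauchy)).add
      (hbwd.comp (tendsto_add_atTop_nat 1))).const_mul s
  have hrect_eventually :
      ∀ᶠ n in atTop, ρ x y ≤ s * (ρ x (xs n) + ρ (xs n) (xs (n + 1)) + ρ (xs (n + 1)) y) := by
    have hsucc := tendsto_add_atTop_nat 1
    filter_upwards [hinj.eventually_ne_atTop x, hinj.eventually_ne_atTop y,
      hsucc.eventually (hinj.eventually_ne_atTop x),
      hsucc.eventually (hinj.eventually_ne_atTop y)] with n hnx hny hsx hsy
    exact hrect x y _ _ (hinj.ne n.succ_ne_self.symm) hnx hny hsx hsy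
  have hle : ρ x y ≤ 0 := ge_of_tendsto hbound hrect_eventually
  exact (hzero x y).mp (hle.antisymm (hnonneg x y))

theorem rqb_forward_backward_limits_eq
    {X : Type*} (ρ : X → X → ℝ) (s : ℝ) (hs : 1 ≤ s)
    (hnonneg : ∀ x y, 0 ≤ ρ x y)
    (hzero : ∀ x y, ρ x y = 0 ↔ x = y)
    (hrect : ∀ x y u v : X, u ≠ v → u ≠ x → u ≠ y → v ≠ x → v ≠ y →
      ρ x y ≤ s * (ρ x u + ρ u v + ρ v y))
    (xs : ℕ → X)
    (hinj : Function.Injective xs)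
    (hcauchy : ∀ ε > (0:ℝ), ∃ N, ∀ n m, N ≤ n → n ≤ m → ρ (xs n) (xs m) < ε)
    (x y : X)
    (hfwd : Tendsto (fun n => ρ x (xs n)) atTop (𝓝 0))
    (hbwd : Tendsto (fun n => ρ (xs n) y) atTop (𝓝 0)) :
    x = y :=
  rqb_forward_backward_limits_eq_general ρ s hnonneg hzero hrect xs hinj hcauchy x y hfwd hbwd
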